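/- arXiv:1308.3152 — 3 statements merged into one kernel-verified Lean document; each statement's English description precedes it below -/
import Mathlib

section
/- Let R = ℚ[X₁,…,X_k] be the polynomial ring graded by deg X_i = 2n_i for fixed positive integers n₁,…,n_k. Suppose M is a ℤ-graded free R-module whose grading is bounded below. Then M admits a basis over R consisting of homogeneous elements. -/
universe u

open MvPolynomial

lemma mem_mIdeal_iff {k : ℕ} (p : MvPolynomial (Fin k) ℚ) :
    p ∈ Ideal.span (Set.range (X : Fin k → MvPolynomial (Fin k) ℚ)) ↔ constantCoeff p = 0 := by
  constructor
  · intro hp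
    have h : Ideal.span (Set.range (X : Fin k → MvPolynomial (Fin k) ℚ)) ≤
        RingHom.ker (constantCoeff : MvPolynomial (Fin k) ℚ →+* ℚ) := by
      rw [Ideal.span_le]
      rintro _ ⟨i, rfl⟩
      simp [RingHom.mem_ker]
    exact h hp
  · intro hp
    rw [← Set.image_univ, mem_ideal_span_X_image]
    intro m hm
    rcases eq_or_ne m 0 with h0 | h0
    · subst h0
      exact absurd (by simpa [constantCoeff_eq] using hp) (MvPolynomial.mem_support_iff.mp hm)
    · obtain ⟨i, hi⟩ := Finsupp.ne_iff.mp h0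
      exact ⟨i, trivial, by simpa using hi⟩

lemma coeff_eq_zero_of_mem_pow {k : ℕ} : ∀ (j : ℕ) (p : MvPolynomial (Fin k) ℚ),
    p ∈ (Ideal.span (Set.range (X : Fin k → MvPolynomial (Fin k) ℚ))) ^ j →
    ∀ m : Fin k →₀ ℕ, (m.sum fun _ e => e) < j → coeff m p = 0 := by
  intro j
  induction j with
  | zero => intro p _ m hm; omega
  | succ j ih =>
    intro p hp m hm
    rw [pow_succ] at hp
    refine Submodule.mul_induction_on hp ?_ ?_
    · intro a ha b hb
      rw [coeff_mul]
      apply Finset.sum_eq_zero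
      rintro ⟨u, v⟩ huv
      rw [Finset.HasAntidiagonal.mem_antidiagonal] at huv
      rcases eq_or_ne v 0 with hv | hv
      · have hb0 : coeff 0 b = 0 := by
          rw [← constantCoeff_eq]; exact (mem_mIdeal_iff b).mp hb
        simp [hv, hb0]
      · have h1 : 1 ≤ v.sum fun _ e => e := by
          obtain ⟨i, hi⟩ := Finsupp.ne_iff.mp hv
          have hmem : i ∈ v.support := Finsupp.mem_support_iff.mpr (by simpa using hi)
          have : v i ≤ ∑ j6 ∈ v.support, v j6 :=
            Finset.single_le_sum (fun _ _ => Nat.zero_le _) hmem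
          have hvi : 1 ≤ v i := Nat.one_le_iff_ne_zero.mpr (by simpa using hi)
          exact le_trans hvi this
        have hadd : (u.sum fun _ e => e) + (v.sum fun _ e => e) = m.sum fun _ e => e := by
          rw [← huv]
          exact (Finsupp.sum_add_index' (fun _ => rfl) (fun _ _ _ => rfl)).symm
        have hu : (u.sum fun _ e => e) < j := by omega
        have := ih a ha u hu
        simp [this]
    · intro c d hc hd
      simp [coeff_add, hc, hd]

lemma eq_zero_of_forall_mem_pow {k : ℕ} (p : MvPolynomial (Fin k) ℚ)
    (h : ∀ j : ℕ, p ∈ (Ideal.span (Set.range (X : Fin k → MvPolynomial (Fin k) ℚ))) ^ j) :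
    p = 0 := by
  apply MvPolynomial.ext
  intro m
  rw [coeff_zero]
  exact coeff_eq_zero_of_mem_pow _ p (h _) m (Nat.lt_succ_self _)

/-- Let `R = ℚ[X₁,…,X_k]` graded by `deg X_i = 2 n_i` (`n_i > 0`). If `M` is a
`ℤ`-graded free `R`-module whose grading is bounded below, then `M` admits a homogeneous
`R`-basis. -/
theorem homogeneous_basis_of_grading_bounded_below
    {k : ℕ} (n : Fin k → ℕ) (hn : ∀ i, 0 < n i)
    {M : Type u} [AddCommGroup M] [Module ℚ M]
    [Module (MvPolynomial (Fin k) ℚ) M]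
    [IsScalarTower ℚ (MvPolynomial (Fin k) ℚ) M]
    (P : ℤ → Submodule ℚ M)
    (hinternal : DirectSum.IsInternal P)
    (hcompat : ∀ (i : Fin k) (d : ℤ) (x : M), x ∈ P d →
      (MvPolynomial.X i : MvPolynomial (Fin k) ℚ) • x ∈ P (d + 2 * (n i : ℤ)))
    (hbdd : ∃ d₀ : ℤ, ∀ d : ℤ, d < d₀ → P d = ⊥)
    [Module.Free (MvPolynomial (Fin k) ℚ) M] :
    ∃ (ι : Type u) (b : Module.Basis ι (MvPolynomial (Fin k) ℚ) M),
      ∀ j : ι, ∃ d : ℤ, b j ∈ P d := by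
  classical
  obtain ⟨d₀, hd₀⟩ := hbdd
  -- scalar multiplication by `X i`, as a `ℚ`-linear map
  let lsX : Fin k → (M →ₗ[ℚ] M) := fun i =>
    { toFun := fun m => (X i : MvPolynomial (Fin k) ℚ) • m
      map_add' := fun a b => smul_add _ a b
      map_smul' := fun q a => by
        simp only [RingHom.id_apply]
        rw [← algebraMap_smul (MvPolynomial (Fin k) ℚ) q a, ← mul_smul,
          mul_comm (X i : MvPolynomial (Fin k) ℚ), mul_smul, algebraMap_smul] }
  have lsX_apply : ∀ (i : Fin k) (m : M), lsX i m = (X i : MvPolynomial (Fin k) ℚ) • m :=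
    fun _ _ => rfl
  -- the "degree d part of 𝔪 M"
  let Wsub : ℤ → Submodule ℚ M := fun d =>
    ⨆ i : Fin k, (P (d - 2 * (n i : ℤ))).map (lsX i)
  have hWle : ∀ d, Wsub d ≤ P d := by
    intro d
    refine iSup_le fun i => ?_
    rintro _ ⟨y, hy, rfl⟩
    have := hcompat i _ y hy
    rw [lsX_apply]
    rwa [show d - 2 * (n i : ℤ) + 2 * (n i : ℤ) = d by ring] at this
  let WW : Submodule ℚ M := ⨆ d, Wsub d
  have hXmemWW : ∀ (i : Fin k) (m : M), (X i : MvPolynomial (Fin k) ℚ) • m ∈ WW := by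
    intro i m
    have hm : m ∈ ⨆ e, P e := by rw [hinternal.submodule_iSup_eq_top]; trivial
    have h2 : lsX i m ∈ Submodule.map (lsX i) (⨆ e, P e) := Submodule.mem_map_of_mem hm
    rw [Submodule.map_iSup] at h2
    have h3 : (⨆ e, Submodule.map (lsX i) (P e)) ≤ WW := by
      refine iSup_le fun e => ?_
      have h1 : Submodule.map (lsX i) (P e) ≤ Wsub (e + 2 * (n i : ℤ)) := by
        have h4 := le_iSup
          (fun i' : Fin k => (P (e + 2 * (n i : ℤ) - 2 * (n i' : ℤ))).map (lsX i')) i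
        rwa [show e + 2 * (n i : ℤ) - 2 * (n i : ℤ) = e by ring] at h4
      exact le_trans h1 (le_iSup _ _)
    rw [← lsX_apply]
    exact h3 h2
  have hsmul_mem_WW : ∀ p ∈ Ideal.span (Set.range (X : Fin k → MvPolynomial (Fin k) ℚ)),
      ∀ m : M, p • m ∈ WW := by
    intro p hp
    induction hp using Submodule.span_induction with
    | mem q hq => obtain ⟨i, rfl⟩ := hq; exact fun m => hXmemWW i m
    | zero => intro m; rw [zero_smul]; exact WW.zero_mem
    | add q r _ _ ihq ihr => intro m; rw [add_smul]; exact WW.add_mem (ihq m) (ihr m)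
    | smul a q _ ihq =>
        intro m
        rw [smul_eq_mul, mul_comm, mul_smul]
        exact ihq (a • m)
  -- choose complements and bases
  let W' : ∀ d : ℤ, Submodule ℚ ↥(P d) := fun d => (Wsub d).comap (P d).subtype
  have hCex : ∀ d : ℤ, ∃ C : Submodule ℚ ↥(P d), IsCompl (W' d) C := fun d =>
    Submodule.exists_isCompl _
  choose C' hC' using hCex
  let bW : ∀ d, Module.Basis (Module.Basis.ofVectorSpaceIndex ℚ ↥(W' d)) ℚ ↥(W' d) := fun d =>
    Module.Basis.ofVectorSpace ℚ _
  let bC : ∀ d, Module.Basis (Module.Basis.ofVectorSpaceIndex ℚ ↥(C' d)) ℚ ↥(C' d) := fun d =>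
    Module.Basis.ofVectorSpace ℚ _
  let β : ∀ d, Module.Basis ((Module.Basis.ofVectorSpaceIndex ℚ ↥(W' d)) ⊕ (Module.Basis.ofVectorSpaceIndex ℚ ↥(C' d)))
      ℚ ↥(P d) :=
    fun d => ((bW d).prod (bC d)).map (Submodule.prodEquivOfIsCompl _ _ (hC' d))
  let B := hinternal.collectedBasis β
  have hB_coe : ∀ j : Σ d : ℤ,
      ((Module.Basis.ofVectorSpaceIndex ℚ ↥(W' d)) ⊕ (Module.Basis.ofVectorSpaceIndex ℚ ↥(C' d))),
      B j = ((β j.1 j.2 : ↥(P j.1)) : M) := by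
    intro j
    rw [hinternal.collectedBasis_coe]
  have hβinl : ∀ (d : ℤ) (i : Module.Basis.ofVectorSpaceIndex ℚ ↥(W' d)),
      β d (Sum.inl i) = ((bW d i : ↥(W' d)) : ↥(P d)) := by
    intro d i
    rw [Module.Basis.map_apply, Submodule.coe_prodEquivOfIsCompl']
    rw [Module.Basis.prod_apply_inl_fst, Module.Basis.prod_apply_inl_snd]
    simp
  have hβinr : ∀ (d : ℤ) (i : Module.Basis.ofVectorSpaceIndex ℚ ↥(C' d)),
      β d (Sum.inr i) = ((bC d i : ↥(C' d)) : ↥(P d)) := by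
    intro d i
    rw [Module.Basis.map_apply, Submodule.coe_prodEquivOfIsCompl']
    rw [Module.Basis.prod_apply_inr_fst, Module.Basis.prod_apply_inr_snd]
    simp
  have hβinl_mem : ∀ (d : ℤ) (i : Module.Basis.ofVectorSpaceIndex ℚ ↥(W' d)),
      ((β d (Sum.inl i) : ↥(P d)) : M) ∈ Wsub d := by
    intro d i
    rw [hβinl]
    have h2 : (((bW d i : ↥(W' d)) : ↥(P d)) : M) ∈ Submodule.map (P d).subtype (W' d) :=
      Submodule.mem_map_of_mem (bW d i : ↥(W' d)).2
    rw [Submodule.map_comap_subtype] at h2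
    exact h2.2
  -- the candidate basis index and vectors
  let ι : Type u := Σ d : ℤ, (Module.Basis.ofVectorSpaceIndex ℚ ↥(C' d))
  let x : ι → M := fun s => B ⟨s.1, Sum.inr s.2⟩
  -- generation
  let NN : Submodule (MvPolynomial (Fin k) ℚ) M :=
    Submodule.span (MvPolynomial (Fin k) ℚ) (Set.range x)
  have hgen : ∀ (j : ℕ) (d : ℤ), d < d₀ + j →
      P d ≤ NN.restrictScalars ℚ := by
    intro j
    induction j with
    | zero =>
      intro d hd m hm
      rw [hd₀ d (by simpa using hd)] at hm
      rw [Submodule.mem_bot] at hm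
      subst hm
      exact Submodule.zero_mem _
    | succ j ih =>
      intro d hd
      by_cases hd' : d < d₀ + j
      · exact ih d hd'
      · have hWN : Wsub d ≤ NN.restrictScalars ℚ := by
          refine iSup_le fun i => ?_
          rintro _ ⟨y, hy, rfl⟩
          have hni := hn i
          have hy' : y ∈ NN := ih (d - 2 * (n i : ℤ)) (by omega) hy
          exact Submodule.smul_mem NN _ hy'
        intro m hm
        have h1 : (⟨m, hm⟩ : ↥(P d)) ∈ Submodule.span ℚ (Set.range (β d)) := by
          rw [(β d).span_eq]; trivial
        have h2 : m ∈ Submodule.map (P d).subtype (Submodule.span ℚ (Set.range (β d))) :=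
          ⟨_, h1, rfl⟩
        rw [Submodule.map_span] at h2
        refine Submodule.span_le.mpr ?_ h2
        rintro _ ⟨_, ⟨j', rfl⟩, rfl⟩
        cases j' with
        | inl i => exact hWN (hβinl_mem d i)
        | inr i =>
          refine Submodule.subset_span ⟨⟨d, i⟩, ?_⟩
          exact hB_coe ⟨d, Sum.inr i⟩
  have hgenall : ∀ m : M, m ∈ NN := by
    intro m
    have hm : m ∈ ⨆ d, P d := by rw [hinternal.submodule_iSup_eq_top]; trivial
    have h3 : (⨆ d, P d) ≤ NN.restrictScalars ℚ := by
      refine iSup_le fun d => ?_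
      by_cases hd : d < d₀
      · intro m' hm'
        rw [hd₀ d hd, Submodule.mem_bot] at hm'
        subst hm'
        exact Submodule.zero_mem _
      · exact hgen ((d + 1 - d₀).toNat) d (by omega)
    exact h3 hm
  -- the linear map from the free module
  let φ : (ι →₀ MvPolynomial (Fin k) ℚ) →ₗ[MvPolynomial (Fin k) ℚ] M :=
    Finsupp.linearCombination (MvPolynomial (Fin k) ℚ) x
  have hφsurj : Function.Surjective φ := by
    rw [← LinearMap.range_eq_top, Finsupp.range_linearCombination]
    exact eq_top_iff.mpr fun m _ => hgenall m
  -- every element of the kernel has coordinates in 𝔪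
  have hker : ∀ z : ι →₀ MvPolynomial (Fin k) ℚ, φ z = 0 → ∀ s : ι,
      z s ∈ Ideal.span (Set.range (X : Fin k → MvPolynomial (Fin k) ℚ)) := by
    intro z hz s
    rw [mem_mIdeal_iff]
    by_cases hs : s ∈ z.support
    swap
    · rw [Finsupp.notMem_support_iff.mp hs]; simp
    set c : ι → ℚ := fun t => constantCoeff (z t) with hc
    have hsum : ∑ t ∈ z.support, z t • x t = 0 := by
      rw [← hz, Finsupp.linearCombination_apply, Finsupp.sum]
    have hsplit : ∑ t ∈ z.support, (c t) • x t
        = - ∑ t ∈ z.support, (z t - C (c t)) • x t := by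
      rw [eq_neg_iff_add_eq_zero, ← Finset.sum_add_distrib, ← hsum]
      refine Finset.sum_congr rfl fun t _ => ?_
      rw [← algebraMap_smul (MvPolynomial (Fin k) ℚ) (c t) (x t), algebraMap_eq, ← add_smul]
      ring_nf
    have hv : (∑ t ∈ z.support, (c t) • x t) ∈ WW := by
      rw [hsplit]
      refine neg_mem (Submodule.sum_mem _ fun t _ => ?_)
      refine hsmul_mem_WW _ ?_ (x t)
      rw [mem_mIdeal_iff]
      simp [hc]
    -- WW is contained in the span of the "inl" basis vectors
    have hWspan : WW ≤ Submodule.span ℚ (Set.range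
        (fun q : (Σ e : ℤ, (Module.Basis.ofVectorSpaceIndex ℚ ↥(W' e))) => B ⟨q.1, Sum.inl q.2⟩)) := by
      refine iSup_le fun d => ?_
      intro w hw
      have hwP : w ∈ P d := hWle d hw
      have hw' : (⟨w, hwP⟩ : ↥(P d)) ∈ W' d := hw
      have h1 : (⟨⟨w, hwP⟩, hw'⟩ : ↥(W' d)) ∈ Submodule.span ℚ (Set.range (bW d)) := by
        rw [(bW d).span_eq]; trivial
      have h2 : w ∈ Submodule.map ((P d).subtype.comp (W' d).subtype)
          (Submodule.span ℚ (Set.range (bW d))) := ⟨_, h1, rfl⟩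
      rw [Submodule.map_span] at h2
      refine Submodule.span_le.mpr ?_ h2
      rintro _ ⟨_, ⟨i, rfl⟩, rfl⟩
      refine Submodule.subset_span ⟨⟨d, i⟩, ?_⟩
      show B ⟨d, Sum.inl i⟩ = _
      rw [hB_coe ⟨d, Sum.inl i⟩, hβinl]
      rfl
    -- the coordinate of v at the `inr` index of `s` is both `c s` and `0`
    have hcoord0 : B.coord ⟨s.1, Sum.inr s.2⟩ (∑ t ∈ z.support, (c t) • x t) = 0 := by
      have hkill : Submodule.span ℚ (Set.range
          (fun q : (Σ e : ℤ, (Module.Basis.ofVectorSpaceIndex ℚ ↥(W' e))) => B ⟨q.1, Sum.inl q.2⟩))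
          ≤ LinearMap.ker (B.coord ⟨s.1, Sum.inr s.2⟩) := by
        rw [Submodule.span_le]
        rintro _ ⟨q, rfl⟩
        rw [SetLike.mem_coe, LinearMap.mem_ker, Module.Basis.coord_apply, Module.Basis.repr_self]
        refine Finsupp.single_eq_of_ne ?_
        intro hcontra
        have := congrArg (fun j : Σ d : ℤ,
          ((Module.Basis.ofVectorSpaceIndex ℚ ↥(W' d)) ⊕ (Module.Basis.ofVectorSpaceIndex ℚ ↥(C' d))) =>
          j.2.isLeft) hcontra
        simp at this
      exact hkill (hWspan hv)
    have hcoordc : B.coord ⟨s.1, Sum.inr s.2⟩ (∑ t ∈ z.support, (c t) • x t) = c s := by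
      rw [map_sum]
      have hterm : ∀ t ∈ z.support,
          B.coord ⟨s.1, Sum.inr s.2⟩ ((c t) • x t)
            = if t = s then c t else 0 := by
        intro t _
        rw [map_smul]
        have hxt : x t = B ⟨t.1, Sum.inr t.2⟩ := rfl
        rw [hxt, Module.Basis.coord_apply, Module.Basis.repr_self]
        by_cases hts : t = s
        · subst hts; simp
        · rw [Finsupp.single_eq_of_ne, smul_zero, if_neg hts]
          intro hcontra
          refine hts ?_
          have hinj : Function.Injective
              (fun t : ι => (⟨t.1, Sum.inr t.2⟩ : Σ d : ℤ,
                ((Module.Basis.ofVectorSpaceIndex ℚ ↥(W' d)) ⊕ (Module.Basis.ofVectorSpaceIndex ℚ ↥(C' d))))) := by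
            rintro ⟨a1, a2⟩ ⟨b1, b2⟩ h
            simp only at h
            injection h with hh1 hh2
            subst hh1
            rw [heq_eq_eq] at hh2
            injection hh2 with hh3
            rw [hh3]
          exact hinj hcontra.symm
      rw [Finset.sum_congr rfl hterm, Finset.sum_ite_eq' z.support s c, if_pos hs]
    rw [hcoord0] at hcoordc
    exact hcoordc.symm
  -- iterate: kernel coordinates lie in all powers of 𝔪
  obtain ⟨σf, hσ⟩ := Module.projective_lifting_property φ LinearMap.id hφsurj
  have hσ' : ∀ w : M, φ (σf w) = w := fun w => congrArg (fun g => g w) hσ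
  have hψ : ∀ y : ι →₀ MvPolynomial (Fin k) ℚ, φ (y - σf (φ y)) = 0 := fun y => by
    rw [map_sub, hσ', sub_self]
  have hpow : ∀ (j : ℕ) (z : ι →₀ MvPolynomial (Fin k) ℚ), φ z = 0 → ∀ s : ι,
      z s ∈ (Ideal.span (Set.range (X : Fin k → MvPolynomial (Fin k) ℚ))) ^ j := by
    intro j
    induction j with
    | zero => intro z _ s; rw [pow_zero, Ideal.one_eq_top]; trivial
    | succ j ih =>
      intro z hz s
      set g : ι → (ι →₀ MvPolynomial (Fin k) ℚ) := fun t =>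
        Finsupp.single t 1 - σf (φ (Finsupp.single t 1)) with hg
      have h1 : ∑ t ∈ z.support, (z t) • Finsupp.single t (1 : MvPolynomial (Fin k) ℚ) = z := by
        conv_rhs => rw [← Finsupp.sum_single z]
        rw [Finsupp.sum]
        refine Finset.sum_congr rfl fun t _ => ?_
        rw [Finsupp.smul_single' (z t) t 1, mul_one]
      have hzψ : z = ∑ t ∈ z.support, (z t) • g t := by
        have h3 : ∑ t ∈ z.support, (z t) • σf (φ (Finsupp.single t 1)) = σf (φ z) := by
          conv_rhs => rw [← h1]
          rw [map_sum, map_sum]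
          refine Finset.sum_congr rfl fun t _ => ?_
          rw [map_smul, map_smul]
        have h2 : ∑ t ∈ z.support, (z t) • g t = z - σf (φ z) := by
          simp only [hg, smul_sub, Finset.sum_sub_distrib, h1, h3]
        rw [hz, map_zero, sub_zero] at h2
        exact h2.symm
      have hzs : z s = ∑ t ∈ z.support, z t * (g t) s := by
        conv_lhs => rw [hzψ]
        rw [Finsupp.finset_sum_apply]
        refine Finset.sum_congr rfl fun t _ => ?_
        rw [Finsupp.smul_apply, smul_eq_mul]
      rw [hzs]
      refine Ideal.sum_mem _ fun t _ => ?_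
      rw [pow_succ]
      exact Ideal.mul_mem_mul (ih z hz t) (hker (g t) (hψ _) s)
  have hφinj : Function.Injective φ := by
    rw [← LinearMap.ker_eq_bot]
    rw [LinearMap.ker_eq_bot']
    intro z hz
    refine Finsupp.ext fun s => ?_
    rw [Finsupp.zero_apply]
    exact eq_zero_of_forall_mem_pow _ fun j => hpow j z hz s
  let E := LinearEquiv.ofBijective φ ⟨hφinj, hφsurj⟩
  refine ⟨ι, Module.Basis.ofRepr E.symm, fun s => ⟨s.1, ?_⟩⟩
  have h1 : (Module.Basis.ofRepr E.symm) s = E (Finsupp.single s 1) := by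
    rw [Module.Basis.coe_ofRepr]
    simp
  rw [h1]
  have h2 : E (Finsupp.single s 1) = x s := by
    show φ (Finsupp.single s 1) = x s
    rw [Finsupp.linearCombination_single, one_smul]
  rw [h2]
  exact hinternal.collectedBasis_mem β ⟨s.1, Sum.inr s.2⟩
end

section
/- Let R = ℚ[a, X₁,…,X_k] be the polynomial ring bigraded by deg a = (2,0) and deg X_i = (0, 2n_i) for fixed positive integers n₁,…,n_k. Suppose M is a ℤ⊕ℤ-graded free R-module whose a-grading and x-grading are both bounded below. Then M admits a basis over R consisting of homogeneous elements. In particular, every ℤ⊕ℤ-graded finitely generated free R-module admits a homogeneous basis over R. -/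
universe u
open MvPolynomial

namespace HBaux
section A


variable {k : ℕ} {M : Type u} [AddCommGroup M] [Module ℚ M]

/-- Projection onto the `d`-th graded piece. -/
noncomputable def pi (P : ℤ × ℤ → Submodule ℚ M) (h : DirectSum.IsInternal P) (d : ℤ × ℤ) :
    M →ₗ[ℚ] M :=
  (P d).subtype ∘ₗ (DirectSum.component ℚ (ℤ × ℤ) (fun e => ↥(P e)) d) ∘ₗ
    (LinearEquiv.ofBijective (DirectSum.coeLinearMap P) h).symm.toLinearMap

theorem pi_mem (P : ℤ × ℤ → Submodule ℚ M) (h : DirectSum.IsInternal P) (d : ℤ × ℤ) (x : M) :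
    pi P h d x ∈ P d := by
  simp [pi]

theorem pi_same {P : ℤ × ℤ → Submodule ℚ M} (h : DirectSum.IsInternal P) {d : ℤ × ℤ} {x : M}
    (hx : x ∈ P d) : pi P h d x = x := by
  have := h.ofBijective_coeLinearMap_of_mem hx
  simp [pi, DirectSum.component, DFinsupp.lapply]
  erw [this]

theorem pi_ne {P : ℤ × ℤ → Submodule ℚ M} (h : DirectSum.IsInternal P) {d d' : ℤ × ℤ} {x : M}
    (hx : x ∈ P d) (hne : d ≠ d') : pi P h d' x = 0 := by
  have := h.ofBijective_coeLinearMap_of_mem_ne hne hx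
  simp [pi, DirectSum.component, DFinsupp.lapply]
  erw [this]


end A
section B


def shift {k : ℕ} (n : Fin k → ℕ) : Option (Fin k) → ℤ × ℤ → ℤ × ℤ
  | none, d => (d.1 + 2, d.2)
  | some i, d => (d.1, d.2 + 2 * (n i : ℤ))

def unshift {k : ℕ} (n : Fin k → ℕ) : Option (Fin k) → ℤ × ℤ → ℤ × ℤ
  | none, d => (d.1 - 2, d.2)
  | some i, d => (d.1, d.2 - 2 * (n i : ℤ))

theorem shift_unshift {k : ℕ} (n : Fin k → ℕ) (s : Option (Fin k)) (d : ℤ × ℤ) :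
    shift n s (unshift n s d) = d := by cases s <;> simp [shift, unshift]

theorem unshift_shift {k : ℕ} (n : Fin k → ℕ) (s : Option (Fin k)) (d : ℤ × ℤ) :
    unshift n s (shift n s d) = d := by cases s <;> simp [shift, unshift]

theorem wt_unshift {k : ℕ} (n : Fin k → ℕ) (hn : ∀ i, 0 < n i) (s : Option (Fin k)) (d : ℤ × ℤ) :
    (unshift n s d).1 + (unshift n s d).2 ≤ d.1 + d.2 - 2 := by
  cases s with
  | none => simp [unshift]; omega
  | some i =>
    have : (1 : ℤ) ≤ (n i : ℤ) := by exact_mod_cast hn i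
    simp [unshift]; omega

theorem shift_ge {k : ℕ} (n : Fin k → ℕ) (s : Option (Fin k)) (d : ℤ × ℤ) {j₀ k₀ : ℤ}
    (h1 : j₀ ≤ d.1) (h2 : k₀ ≤ d.2) : j₀ ≤ (shift n s d).1 ∧ k₀ ≤ (shift n s d).2 := by
  cases s with
  | none => simp [shift]; omega
  | some i => 
    have : (0 : ℤ) ≤ (n i : ℤ) := by positivity
    simp [shift]; constructor <;> omega

variable {k : ℕ} {M : Type u} [AddCommGroup M] [Module ℚ M]
  [Module (MvPolynomial (Option (Fin k)) ℚ) M]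
  [IsScalarTower ℚ (MvPolynomial (Option (Fin k)) ℚ) M]

/-- multiplication by `X s` as a `ℚ`-linear map -/
noncomputable def smulX (s : Option (Fin k)) : M →ₗ[ℚ] M where
  toFun x := (X s : MvPolynomial (Option (Fin k)) ℚ) • x
  map_add' := smul_add _
  map_smul' q x := smul_comm _ q x

noncomputable def TT (k : ℕ) (M : Type u) [AddCommGroup M] [Module ℚ M]
    [Module (MvPolynomial (Option (Fin k)) ℚ) M]
    [IsScalarTower ℚ (MvPolynomial (Option (Fin k)) ℚ) M] : Submodule ℚ M :=
  ⨆ s : Option (Fin k), LinearMap.range (smulX (M := M) s)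

theorem mem_TT (s : Option (Fin k)) (x : M) :
    (X s : MvPolynomial (Option (Fin k)) ℚ) • x ∈ TT k M :=
  (le_iSup (fun s => LinearMap.range (smulX (M := M) s)) s) ⟨x, rfl⟩


end B

section C
variable {k : ℕ} {M : Type u} [AddCommGroup M] [Module ℚ M]
  [Module (MvPolynomial (Option (Fin k)) ℚ) M]
  [IsScalarTower ℚ (MvPolynomial (Option (Fin k)) ℚ) M]
  (n : Fin k → ℕ)
  {P : ℤ × ℤ → Submodule ℚ M} (h : DirectSum.IsInternal P)
  (hc : ∀ (s : Option (Fin k)) (d : ℤ × ℤ) (x : M), x ∈ P d →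
    (X s : MvPolynomial (Option (Fin k)) ℚ) • x ∈ P (shift n s d))

include hc in
theorem pi_smulX (s : Option (Fin k)) (d : ℤ × ℤ) (x : M) :
    pi P h d ((X s : MvPolynomial (Option (Fin k)) ℚ) • x) =
      (X s : MvPolynomial (Option (Fin k)) ℚ) • pi P h (unshift n s d) x := by
  have hx : x ∈ ⨆ e, P e := by rw [h.submodule_iSup_eq_top]; trivial
  refine Submodule.iSup_induction (motive := fun z => pi P h d ((X s : MvPolynomial (Option (Fin k)) ℚ) • z) =
      (X s : MvPolynomial (Option (Fin k)) ℚ) • pi P h (unshift n s d) z) P hx ?_ ?_ ?_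
  · intro d' y hy
    by_cases hcase : shift n s d' = d
    · rw [pi_same h (hcase ▸ hc s d' y hy)]
      rw [pi_same h (show y ∈ P (unshift n s d) from by rw [← hcase, unshift_shift]; exact hy)]
    · rw [pi_ne h (hc s d' y hy) hcase]
      rw [pi_ne h hy (fun hEq => hcase (by rw [hEq, shift_unshift]))]
      rw [smul_zero]
  · simp only [smul_zero, map_zero]
  · intro a b ha hb
    simp only [smul_add, map_add] at *
    rw [ha, hb]

include hc in
theorem pi_TT (d : ℤ × ℤ) {y : M} (hy : y ∈ TT k M) : pi P h d y ∈ TT k M := by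
  refine Submodule.iSup_induction (motive := fun z => pi P h d z ∈ TT k M) _ hy ?_ ?_ ?_
  · intro s z hz
    obtain ⟨w, rfl⟩ := hz
    show pi P h d ((X s : MvPolynomial (Option (Fin k)) ℚ) • w) ∈ TT k M
    rw [pi_smulX n h hc]
    exact mem_TT _ _
  · simp only [map_zero]; exact zero_mem _
  · intro a b ha hb
    simp only [map_add] at *
    exact add_mem ha hb

end C

section D
variable {k : ℕ} {M : Type u} [AddCommGroup M] [Module ℚ M]
  [Module (MvPolynomial (Option (Fin k)) ℚ) M]
  [IsScalarTower ℚ (MvPolynomial (Option (Fin k)) ℚ) M]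

theorem smul_sub_const_mem_TT (p : MvPolynomial (Option (Fin k)) ℚ) (x : M) :
    p • x - (constantCoeff p : ℚ) • x ∈ TT k M := by
  induction p using MvPolynomial.induction_on with
  | C q =>
    have : (C q : MvPolynomial (Option (Fin k)) ℚ) • x = q • x := by
      rw [← MvPolynomial.algebraMap_eq, algebraMap_smul]
    rw [constantCoeff_C, this, sub_self]
    exact zero_mem _
  | add p q hp hq =>
    have := add_mem hp hq
    rw [map_add, add_smul, add_smul] at *
    convert this using 1
    abel
  | mul_X p s hp =>
    rw [map_mul, constantCoeff_X, mul_zero, zero_smul, sub_zero, mul_comm, mul_smul]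
    exact mem_TT s _
end D

section Poly
variable {k : ℕ}

noncomputable def mI (k : ℕ) : Ideal (MvPolynomial (Option (Fin k)) ℚ) :=
  Ideal.span (Set.range (X : Option (Fin k) → MvPolynomial (Option (Fin k)) ℚ))

theorem mem_mI_of_constantCoeff_eq_zero {p : MvPolynomial (Option (Fin k)) ℚ}
    (hp : constantCoeff p = 0) : p ∈ mI k := by
  rw [mI, ← Set.image_univ]
  rw [mem_ideal_span_X_image]
  intro m hm
  by_contra hcon
  push_neg at hcon
  have hm0 : m = 0 := Finsupp.ext fun i => hcon i (Set.mem_univ i)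
  rw [mem_support_iff, hm0] at hm
  exact hm (by simpa [constantCoeff_eq] using hp)

theorem deg_ge_one_of_mem_mI {p : MvPolynomial (Option (Fin k)) ℚ} (hp : p ∈ mI k)
    {m : Option (Fin k) →₀ ℕ} (hm : m ∈ p.support) : 1 ≤ m.sum fun _ e => e := by
  rw [mI, ← Set.image_univ, mem_ideal_span_X_image] at hp
  obtain ⟨i, -, hi⟩ := hp m hm
  calc 1 ≤ m i := Nat.one_le_iff_ne_zero.mpr hi
  _ ≤ m.sum fun _ e => e := by
    apply Finset.single_le_sum (f := fun j => m j) (fun _ _ => Nat.zero_le _)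
    rwa [Finsupp.mem_support_iff]

theorem deg_ge_of_mem_mI_pow {N : ℕ} {p : MvPolynomial (Option (Fin k)) ℚ}
    (hp : p ∈ mI k ^ N) {m : Option (Fin k) →₀ ℕ} (hm : m ∈ p.support) :
    N ≤ m.sum fun _ e => e := by
  induction N generalizing p m with
  | zero => exact Nat.zero_le _
  | succ N ih =>
    rw [pow_succ] at hp
    refine Submodule.mul_induction_on (C := fun q => ∀ m ∈ q.support, N + 1 ≤ m.sum fun _ e => e)
      hp ?_ ?_ m hm
    · intro r hr s0 hs0 m hm
      have := MvPolynomial.support_mul r s0 hm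
      rw [Finset.mem_add] at this
      obtain ⟨a, ha, b, hb, rfl⟩ := this
      have h1 : N ≤ a.sum fun _ e => e := ih hr ha
      have h2 : 1 ≤ b.sum fun _ e => e := deg_ge_one_of_mem_mI hs0 hb
      rw [Finsupp.sum_add_index' (fun _ => rfl) (fun _ _ _ => rfl)]
      omega
    · intro x y hx hy m hm
      have := Finsupp.support_add hm
      rw [Finset.mem_union] at this
      rcases this with h | h
      · exact hx m h
      · exact hy m h

theorem coeff_eq_zero_of_mem_mI_pow {N : ℕ} {p : MvPolynomial (Option (Fin k)) ℚ}
    (hp : p ∈ mI k ^ N) {m : Option (Fin k) →₀ ℕ} (hm : (m.sum fun _ e => e) < N) :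
    coeff m p = 0 := by
  by_contra hcon
  exact absurd (deg_ge_of_mem_mI_pow hp (mem_support_iff.mpr hcon)) (by omega)

theorem eq_zero_of_forall_mem_mI_pow {p : MvPolynomial (Option (Fin k)) ℚ}
    (hp : ∀ N : ℕ, p ∈ mI k ^ N) : p = 0 := by
  ext m
  rw [coeff_zero]
  exact coeff_eq_zero_of_mem_mI_pow (hp ((m.sum fun _ e => e) + 1)) (by omega)

end Poly

section Main
variable {k : ℕ} {M : Type u} [AddCommGroup M] [Module ℚ M]
  [Module (MvPolynomial (Option (Fin k)) ℚ) M]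
  [IsScalarTower ℚ (MvPolynomial (Option (Fin k)) ℚ) M]

theorem aux_main (n : Fin k → ℕ) (hn : ∀ i, 0 < n i)
    (P : ℤ × ℤ → Submodule ℚ M)
    (h : DirectSum.IsInternal P)
    (hc : ∀ (s : Option (Fin k)) (d : ℤ × ℤ) (x : M), x ∈ P d →
      (X s : MvPolynomial (Option (Fin k)) ℚ) • x ∈ P (shift n s d))
    (hbdd : ∃ j₀ k₀ : ℤ, ∀ d : ℤ × ℤ, d.1 < j₀ ∨ d.2 < k₀ → P d = ⊥)
    [Module.Free (MvPolynomial (Option (Fin k)) ℚ) M] :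
    ∃ (ι : Type u) (b : Module.Basis ι (MvPolynomial (Option (Fin k)) ℚ) M),
      ∀ j : ι, ∃ d : ℤ × ℤ, b j ∈ P d := by
  classical
  obtain ⟨j₀, k₀, hb⟩ := hbdd
  -- complements
  have hcompl : ∀ d : ℤ × ℤ, ∃ Ud : Submodule ℚ ↥(P d),
      IsCompl ((TT k M).comap (P d).subtype) Ud := fun d => Submodule.exists_isCompl _
  choose Ud hUd using hcompl
  set Cd : ℤ × ℤ → Submodule ℚ M := fun d => (Ud d).map (P d).subtype with hCdDef
  have Cd_le : ∀ d, Cd d ≤ P d := by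
    intro d x hx
    obtain ⟨y, -, rfl⟩ := hx
    exact y.2
  have Cd_T : ∀ (d : ℤ × ℤ) (x : M), x ∈ Cd d → x ∈ TT k M → x = 0 := by
    intro d x hx hxT
    obtain ⟨y, hy, rfl⟩ := hx
    have : y ∈ (TT k M).comap (P d).subtype ⊓ Ud d := ⟨hxT, hy⟩
    rw [(hUd d).inf_eq_bot] at this
    rw [this]; rfl
  have decomp : ∀ (d : ℤ × ℤ) (x : M), x ∈ P d → ∃ c ∈ Cd d, x - c ∈ TT k M := by
    intro d x hx
    have : (⟨x, hx⟩ : ↥(P d)) ∈ (TT k M).comap (P d).subtype ⊔ Ud d := by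
      rw [(hUd d).sup_eq_top]; trivial
    obtain ⟨w, hw, u, hu, huw⟩ := Submodule.mem_sup.mp this
    refine ⟨(u : M), ⟨u, hu, rfl⟩, ?_⟩
    have : x = (w : M) + (u : M) := by rw [← Submodule.coe_add, huw]
    rw [this]; simpa using hw
  -- the candidate basis
  let ι : Type u := Σ d : ℤ × ℤ, ↥(Module.Basis.ofVectorSpaceIndex ℚ ↥(Cd d))
  let bC : ∀ d, Module.Basis ↥(Module.Basis.ofVectorSpaceIndex ℚ ↥(Cd d)) ℚ ↥(Cd d) :=
    fun d => Module.Basis.ofVectorSpace ℚ ↥(Cd d)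
  let v : ι → M := fun j => ((bC j.1 j.2 : ↥(Cd j.1)) : M)
  have v_memC : ∀ j : ι, v j ∈ Cd j.1 := fun j => (bC j.1 j.2).2
  have v_memP : ∀ j : ι, v j ∈ P j.1 := fun j => Cd_le _ (v_memC j)
  -- spanning
  set Sp := Submodule.span (MvPolynomial (Option (Fin k)) ℚ) (Set.range v) with hSpDef
  have Cd_le_Sp : ∀ d, Cd d ≤ Sp.restrictScalars ℚ := by
    intro d x hx
    have h1 : (⟨x, hx⟩ : ↥(Cd d)) ∈ Submodule.span ℚ (Set.range (bC d)) := by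
      rw [(bC d).span_eq]; trivial
    have h2 : x ∈ Submodule.map (Cd d).subtype (Submodule.span ℚ (Set.range (bC d))) :=
      ⟨⟨x, hx⟩, h1, rfl⟩
    rw [Submodule.map_span] at h2
    have h3 : Submodule.span ℚ ((Cd d).subtype '' Set.range (bC d)) ≤ Sp.restrictScalars ℚ := by
      rw [Submodule.span_le]
      rintro - ⟨-, ⟨i, rfl⟩, rfl⟩
      exact Submodule.subset_span ⟨⟨d, i⟩, rfl⟩
    exact h3 h2
  have span_piece : ∀ (N : ℕ) (d : ℤ × ℤ), d.1 + d.2 < j₀ + k₀ + N →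
      ∀ x ∈ P d, x ∈ Sp := by
    intro N
    induction N with
    | zero =>
      intro d hd x hx
      have : P d = ⊥ := by
        apply hb
        by_contra hcon
        push_neg at hcon
        omega
      rw [this] at hx
      simp only [Submodule.mem_bot] at hx
      rw [hx]; exact zero_mem _
    | succ N ih =>
      intro d hd x hx
      obtain ⟨c, hcC, hcT⟩ := decomp d x hx
      have hcSp : c ∈ Sp := Cd_le_Sp d hcC
      have hyP : x - c ∈ P d := sub_mem hx (Cd_le d hcC)
      have hyEq : pi P h d (x - c) = x - c := pi_same h hyP
      have hfixed : pi P h d (x - c) ∈ Sp := by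
        refine Submodule.iSup_induction
          (motive := fun z => pi P h d z ∈ Sp) _ hcT ?_ ?_ ?_
        · rintro s z ⟨w, rfl⟩
          show pi P h d ((X s : MvPolynomial (Option (Fin k)) ℚ) • w) ∈ Sp
          rw [pi_smulX n h hc]
          refine Submodule.smul_mem _ _ ?_
          refine ih (unshift n s d) ?_ _ (pi_mem P h _ w)
          have := wt_unshift n hn s d
          omega
        · simp only [map_zero]; exact zero_mem _
        · intro a b ha hb'
          simp only [map_add]
          exact add_mem ha hb'
      have : x - c ∈ Sp := by rw [← hyEq]; exact hfixed
      have := add_mem this hcSp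
      simpa using this
  have span_top : Sp = ⊤ := by
    rw [eq_top_iff]
    rintro x -
    have hx : x ∈ ⨆ d, P d := by rw [h.submodule_iSup_eq_top]; trivial
    refine Submodule.iSup_induction (motive := fun z => z ∈ Sp) P hx ?_ (zero_mem _)
      (fun a b ha hb' => add_mem ha hb')
    intro d y hy
    refine span_piece ((d.1 + d.2 - (j₀ + k₀)).toNat + 1) d ?_ y hy
    have := Int.self_le_toNat (d.1 + d.2 - (j₀ + k₀))
    omega
  -- independence modulo T
  have hSd_le : ∀ d : ℤ × ℤ,
      Submodule.span ℚ (Set.range fun i : ↥(Module.Basis.ofVectorSpaceIndex ℚ ↥(Cd d)) =>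
        v ⟨d, i⟩) ≤ Cd d := by
    intro d
    rw [Submodule.span_le]
    rintro - ⟨i, rfl⟩
    exact v_memC ⟨d, i⟩
  have IndLi : LinearIndependent ℚ (fun j : ι => (TT k M).mkQ (v j)) := by
    refine linearIndependent_iUnion_finite
      (f := fun (d : ℤ × ℤ) (i : ↥(Module.Basis.ofVectorSpaceIndex ℚ ↥(Cd d))) => (TT k M).mkQ (v ⟨d, i⟩))
      (fun d => ?_) (fun d t htfin hdt => ?_)
    · -- independence within one degree
      have := (bC d).linearIndependent.map' ((TT k M).mkQ ∘ₗ (Cd d).subtype)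
        (by
          rw [LinearMap.ker_eq_bot']
          intro y hy
          have : (y : M) ∈ TT k M := by
            simpa [Submodule.Quotient.mk_eq_zero] using hy
          exact Subtype.ext (Cd_T d (y : M) y.2 this))
      exact this
    · -- disjointness across degrees
      have hmap : ∀ d' : ℤ × ℤ,
          Submodule.span ℚ (Set.range fun i : ↥(Module.Basis.ofVectorSpaceIndex ℚ ↥(Cd d')) =>
            (TT k M).mkQ (v ⟨d', i⟩)) =
          Submodule.map ((TT k M).mkQ)
            (Submodule.span ℚ (Set.range fun i : ↥(Module.Basis.ofVectorSpaceIndex ℚ ↥(Cd d')) =>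
              v ⟨d', i⟩)) := by
        intro d'
        rw [Submodule.map_span, ← Set.range_comp]
        rfl
      rw [Submodule.disjoint_def]
      intro z hz1 hz2
      rw [hmap] at hz1
      obtain ⟨c, hcmem, rfl⟩ := hz1
      have hz2' : ∃ y ∈ ⨆ d' ∈ t, Submodule.span ℚ
          (Set.range fun i : ↥(Module.Basis.ofVectorSpaceIndex ℚ ↥(Cd d')) => v ⟨d', i⟩),
          (TT k M).mkQ y = (TT k M).mkQ c := by
        have : (⨆ d' ∈ t, Submodule.span ℚ
            (Set.range fun i : ↥(Module.Basis.ofVectorSpaceIndex ℚ ↥(Cd d')) =>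
              (TT k M).mkQ (v ⟨d', i⟩))) =
            Submodule.map ((TT k M).mkQ) (⨆ d' ∈ t, Submodule.span ℚ
            (Set.range fun i : ↥(Module.Basis.ofVectorSpaceIndex ℚ ↥(Cd d')) => v ⟨d', i⟩)) := by
          simp_rw [hmap, Submodule.map_iSup]
        rw [this] at hz2
        obtain ⟨y, hy, hyz⟩ := hz2
        exact ⟨y, hy, hyz⟩
      obtain ⟨y, hy, hyz⟩ := hz2'
      have hdiff : c - y ∈ TT k M := by
        rw [← Submodule.Quotient.mk_eq_zero]
        have : (TT k M).mkQ (c - y) = 0 := by rw [map_sub, hyz, sub_self]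
        simpa using this
      have hpy : pi P h d y = 0 := by
        have hker' : (⨆ d' ∈ t, Submodule.span ℚ
            (Set.range fun i : ↥(Module.Basis.ofVectorSpaceIndex ℚ ↥(Cd d')) => v ⟨d', i⟩)) ≤
            LinearMap.ker (pi P h d) := by
          refine iSup_le fun d' => iSup_le fun hd' => ?_
          refine le_trans (hSd_le d') (le_trans (Cd_le d') ?_)
          intro w hw
          simp only [LinearMap.mem_ker]
          exact pi_ne h hw (fun hEq => hdt (hEq ▸ hd'))
        exact hker' hy
      have hpc : pi P h d (c - y) = c := by
        rw [map_sub, hpy, sub_zero, pi_same h (Cd_le d (hSd_le d hcmem))]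
      have hcT : c ∈ TT k M := by
        rw [← hpc]; exact pi_TT n h hc d hdiff
      have : c = 0 := Cd_T d c (hSd_le d hcmem) hcT
      rw [this, map_zero]
  -- kernel of the linear combination map is trivial
  have hli : LinearIndependent (MvPolynomial (Option (Fin k)) ℚ) v := by
    set lin := Finsupp.linearCombination (MvPolynomial (Option (Fin k)) ℚ) v with hlinDef
    obtain ⟨sec, hsec⟩ := Module.projective_lifting_property lin LinearMap.id
      (by
        rw [← LinearMap.range_eq_top, hlinDef, Finsupp.range_linearCombination, ← hSpDef,
          span_top])
    have hsec' : ∀ w : M, lin (sec w) = w := fun w => LinearMap.congr_fun hsec w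
    have hker_eps : ∀ x : ι →₀ MvPolynomial (Option (Fin k)) ℚ,
        lin x = 0 → ∀ j, constantCoeff (x j) = 0 := by
      intro x hx j
      set c : ι →₀ ℚ := x.mapRange (⇑constantCoeff) (map_zero _) with hcDef
      have h1 : Finsupp.linearCombination ℚ v c =
          x.sum fun j p => (constantCoeff p : ℚ) • v j := by
        rw [Finsupp.linearCombination_apply, hcDef]
        exact Finsupp.sum_mapRange_index (fun _ => zero_smul ℚ _)
      have h2 : (x.sum fun j p => p • v j - (constantCoeff p : ℚ) • v j) ∈ TT k M := by
        rw [Finsupp.sum]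
        exact Submodule.sum_mem _ fun j _ => smul_sub_const_mem_TT _ _
      have h3 : (x.sum fun j p => p • v j - (constantCoeff p : ℚ) • v j) =
          lin x - Finsupp.linearCombination ℚ v c := by
        rw [Finsupp.sum_sub, h1, hlinDef, Finsupp.linearCombination_apply]
      have h4 : Finsupp.linearCombination ℚ v c ∈ TT k M := by
        have := h2
        rw [h3, hx, zero_sub] at this
        simpa using neg_mem this
      have h5 : (TT k M).mkQ (Finsupp.linearCombination ℚ v c) = 0 := by
        rw [Submodule.mkQ_apply, Submodule.Quotient.mk_eq_zero]; exact h4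
      rw [Finsupp.apply_linearCombination] at h5
      have h6 : c = 0 := linearIndependent_iff.mp IndLi c h5
      have : c j = 0 := by rw [h6]; rfl
      rwa [hcDef, Finsupp.mapRange_apply] at this
    have hker_mI : ∀ x : ι →₀ MvPolynomial (Option (Fin k)) ℚ, lin x = 0 →
        x ∈ mI k • (⊤ : Submodule (MvPolynomial (Option (Fin k)) ℚ)
          (ι →₀ MvPolynomial (Option (Fin k)) ℚ)) := by
      intro x hx
      have hxs : x = x.sum fun j p => Finsupp.single j p := (Finsupp.sum_single x).symm
      rw [hxs, Finsupp.sum]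
      refine Submodule.sum_mem _ fun j _ => ?_
      have hs : Finsupp.single j (x j) = (x j) • Finsupp.single j
          (1 : MvPolynomial (Option (Fin k)) ℚ) := by
        rw [Finsupp.smul_single', mul_one]
      rw [hs]
      exact Submodule.smul_mem_smul (mem_mI_of_constantCoeff_eq_zero (hker_eps x hx j)) trivial
    have nak : ∀ (N : ℕ) (x : ι →₀ MvPolynomial (Option (Fin k)) ℚ), lin x = 0 →
        x ∈ (mI k ^ N) • (⊤ : Submodule (MvPolynomial (Option (Fin k)) ℚ)
          (ι →₀ MvPolynomial (Option (Fin k)) ℚ)) := by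
      intro N
      induction N with
      | zero => intro x _; rw [pow_zero, Ideal.one_eq_top, Submodule.top_smul]; trivial
      | succ N ihN =>
        intro x hx
        have key : ∀ y ∈ mI k • (⊤ : Submodule (MvPolynomial (Option (Fin k)) ℚ)
            (ι →₀ MvPolynomial (Option (Fin k)) ℚ)),
            y - sec (lin y) ∈ (mI k ^ (N + 1)) • (⊤ : Submodule (MvPolynomial (Option (Fin k)) ℚ)
            (ι →₀ MvPolynomial (Option (Fin k)) ℚ)) := by
          intro y hy
          refine Submodule.smul_induction_on hy ?_ ?_
          · intro r hr z _
            have hres : lin (z - sec (lin z)) = 0 := by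
              rw [map_sub, hsec', sub_self]
            have h7 := ihN _ hres
            have h8 : r • (z - sec (lin z)) ∈ mI k • ((mI k ^ N) •
                (⊤ : Submodule (MvPolynomial (Option (Fin k)) ℚ)
                  (ι →₀ MvPolynomial (Option (Fin k)) ℚ))) :=
              Submodule.smul_mem_smul hr h7
            rw [← Submodule.smul_assoc] at h8
            have heq : (mI k • mI k ^ N) = mI k ^ (N + 1) := by
              rw [Ideal.smul_eq_mul, ← pow_succ']
            rw [heq] at h8
            have : r • z - sec (lin (r • z)) = r • (z - sec (lin z)) := by
              rw [map_smul, map_smul, smul_sub]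
            rwa [this]
          · intro y1 y2 h1 h2
            have : (y1 + y2) - sec (lin (y1 + y2)) =
                (y1 - sec (lin y1)) + (y2 - sec (lin y2)) := by
              rw [map_add, map_add]; abel
            rw [this]
            exact add_mem h1 h2
        have := key x (hker_mI x hx)
        rwa [hx, map_zero, sub_zero] at this
    rw [linearIndependent_iff]
    intro l hl
    refine Finsupp.ext fun j => ?_
    have hall : ∀ N : ℕ, l j ∈ mI k ^ N := by
      intro N
      have hmem : (Finsupp.lapply j : (ι →₀ MvPolynomial (Option (Fin k)) ℚ)
            →ₗ[MvPolynomial (Option (Fin k)) ℚ] MvPolynomial (Option (Fin k)) ℚ) l ∈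
          Submodule.map (Finsupp.lapply j) ((mI k ^ N) • ⊤) := ⟨l, nak N l hl, rfl⟩
      rw [Submodule.map_smul''] at hmem
      have hle : (mI k ^ N) • (Submodule.map (Finsupp.lapply j) ⊤) ≤ mI k ^ N := by
        refine Submodule.smul_le.mpr ?_
        intro r hr w _
        rw [smul_eq_mul]
        exact Ideal.mul_mem_right w _ hr
      exact hle hmem
    exact eq_zero_of_forall_mem_mI_pow hall
  exact ⟨ι, Module.Basis.mk hli (by rw [← hSpDef, span_top]),
    fun j => ⟨j.1, by rw [Module.Basis.mk_apply]; exact v_memP j⟩⟩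

end Main

section Bdd
variable {k : ℕ} {M : Type u} [AddCommGroup M] [Module ℚ M]
  [Module (MvPolynomial (Option (Fin k)) ℚ) M]
  [IsScalarTower ℚ (MvPolynomial (Option (Fin k)) ℚ) M]

theorem aux_bdd (n : Fin k → ℕ)
    (Q : ℤ × ℤ → Submodule ℚ M)
    (h : DirectSum.IsInternal Q)
    (hc : ∀ (s : Option (Fin k)) (d : ℤ × ℤ) (x : M), x ∈ Q d →
      (X s : MvPolynomial (Option (Fin k)) ℚ) • x ∈ Q (shift n s d))
    [Module.Finite (MvPolynomial (Option (Fin k)) ℚ) M] :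
    ∃ j₀ k₀ : ℤ, ∀ d : ℤ × ℤ, d.1 < j₀ ∨ d.2 < k₀ → Q d = ⊥ := by
  classical
  obtain ⟨S, hS⟩ := Module.Finite.fg_top
    (R := MvPolynomial (Option (Fin k)) ℚ) (M := M)
  set e := LinearEquiv.ofBijective (DirectSum.coeLinearMap Q) h with heDef
  set D : Finset (ℤ × ℤ) := S.biUnion (fun g => (e.symm g).support) with hD
  set j₀ : ℤ := -((D.sup fun d => (-d.1).toNat : ℕ) : ℤ) with hj₀
  set k₀ : ℤ := -((D.sup fun d => (-d.2).toNat : ℕ) : ℤ) with hk₀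
  have hDgood : ∀ d ∈ D, j₀ ≤ d.1 ∧ k₀ ≤ d.2 := by
    intro d hd
    have h1 : ((-d.1).toNat : ℤ) ≤ ((D.sup fun d => (-d.1).toNat : ℕ) : ℤ) := by
      exact_mod_cast Finset.le_sup (f := fun d : ℤ × ℤ => (-d.1).toNat) hd
    have h2 : ((-d.2).toNat : ℤ) ≤ ((D.sup fun d => (-d.2).toNat : ℕ) : ℤ) := by
      exact_mod_cast Finset.le_sup (f := fun d : ℤ × ℤ => (-d.2).toNat) hd
    have h3 := Int.self_le_toNat (-d.1)
    have h4 := Int.self_le_toNat (-d.2)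
    omega
  set G : Submodule ℚ M :=
    ⨆ d : {d : ℤ × ℤ // j₀ ≤ d.1 ∧ k₀ ≤ d.2}, Q d with hG
  have hQG : ∀ (d : ℤ × ℤ), j₀ ≤ d.1 → k₀ ≤ d.2 → Q d ≤ G :=
    fun d h1 h2 => le_iSup (fun d : {d : ℤ × ℤ // j₀ ≤ d.1 ∧ k₀ ≤ d.2} => Q d) ⟨d, h1, h2⟩
  have hGX : ∀ (s : Option (Fin k)) (x : M), x ∈ G →
      (X s : MvPolynomial (Option (Fin k)) ℚ) • x ∈ G := by
    intro s x hx
    refine Submodule.iSup_induction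
      (motive := fun z => (X s : MvPolynomial (Option (Fin k)) ℚ) • z ∈ G) _ hx ?_ ?_ ?_
    · rintro ⟨d, hd1, hd2⟩ y hy
      have := shift_ge n s d hd1 hd2
      exact hQG _ this.1 this.2 (hc s d y hy)
    · simp only [smul_zero]; exact zero_mem _
    · intro a b ha hb; simp only [smul_add]; exact add_mem ha hb
  have hGsmul : ∀ (p : MvPolynomial (Option (Fin k)) ℚ) (x : M), x ∈ G → p • x ∈ G := by
    intro p
    induction p using MvPolynomial.induction_on with
    | C q =>
      intro x hx
      have : (C q : MvPolynomial (Option (Fin k)) ℚ) • x = q • x := by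
        rw [← MvPolynomial.algebraMap_eq, algebraMap_smul]
      rw [this]
      exact Submodule.smul_mem _ _ hx
    | add p q hp hq =>
      intro x hx
      rw [add_smul]
      exact add_mem (hp x hx) (hq x hx)
    | mul_X p s hp =>
      intro x hx
      rw [mul_smul]
      exact hp _ (hGX s x hx)
  have hNG : ∀ x : M, x ∈ G := by
    intro x
    have hx : x ∈ Submodule.span (MvPolynomial (Option (Fin k)) ℚ) (S : Set M) := by
      rw [hS]; trivial
    refine Submodule.span_induction ?_ (zero_mem _) (fun a b _ _ ha hb => add_mem ha hb)
      (fun r y _ hy => hGsmul r y hy) hx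
    -- generators
    intro g hg
    have hg' : g = DirectSum.coeLinearMap Q (e.symm g) := (e.apply_symm_apply g).symm
    rw [hg', DirectSum.coeLinearMap_eq_dfinsuppSum]
    refine Submodule.dfinsuppSum_mem _ _ _ fun d hd => ?_
    have hdD : d ∈ D := Finset.mem_biUnion.mpr ⟨g, hg, DFinsupp.mem_support_iff.mpr hd⟩
    have := hDgood d hdD
    exact hQG d this.1 this.2 ((e.symm g) d).2
  refine ⟨j₀, k₀, fun d hd => ?_⟩
  rw [eq_bot_iff]
  intro x hx
  have h1 : pi Q h d x = x := pi_same h hx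
  have h2 : G ≤ LinearMap.ker (pi Q h d) := by
    refine iSup_le ?_
    rintro ⟨d', hd1', hd2'⟩ y hy
    simp only [LinearMap.mem_ker]
    refine pi_ne h hy fun hEq => ?_
    have h1' : j₀ ≤ d.1 := hEq ▸ hd1'
    have h2' : k₀ ≤ d.2 := hEq ▸ hd2'
    rcases hd with hbad | hbad <;> omega
  have := h2 (hNG x)
  simp only [LinearMap.mem_ker] at this
  rw [← h1, this]
  simp
end Bdd
end HBaux

/-- Let `R = ℚ[a, X₁,…,X_k]` bigraded by `deg a = (2,0)`,
`deg X_i = (0, 2 n_i)` (`n_i > 0`); here the variable `none` plays the role of `a` and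
`some i` plays the role of `X_i`.  If `M` is a `ℤ⊕ℤ`-graded free `R`-module whose `a`-grading
and `x`-grading are both bounded below, then `M` admits a homogeneous `R`-basis.  In
particular, every `ℤ⊕ℤ`-graded finitely generated free `R`-module admits a homogeneous
`R`-basis. -/
theorem homogeneous_basis_of_bigrading_bounded_below
    {k : ℕ} (n : Fin k → ℕ) (hn : ∀ i, 0 < n i)
    {M : Type u} [AddCommGroup M] [Module ℚ M]
    [Module (MvPolynomial (Option (Fin k)) ℚ) M]
    [IsScalarTower ℚ (MvPolynomial (Option (Fin k)) ℚ) M]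
    (P : ℤ × ℤ → Submodule ℚ M)
    (hinternal : DirectSum.IsInternal P)
    (hcompat_a : ∀ (d : ℤ × ℤ) (x : M), x ∈ P d →
      (MvPolynomial.X (none : Option (Fin k)) : MvPolynomial (Option (Fin k)) ℚ) • x ∈
        P (d.1 + 2, d.2))
    (hcompat_X : ∀ (i : Fin k) (d : ℤ × ℤ) (x : M), x ∈ P d →
      (MvPolynomial.X (some i) : MvPolynomial (Option (Fin k)) ℚ) • x ∈
        P (d.1, d.2 + 2 * (n i : ℤ)))
    (hbdd : ∃ j₀ k₀ : ℤ, ∀ d : ℤ × ℤ, d.1 < j₀ ∨ d.2 < k₀ → P d = ⊥)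
    [Module.Free (MvPolynomial (Option (Fin k)) ℚ) M] :
    (∃ (ι : Type u) (b : Module.Basis ι (MvPolynomial (Option (Fin k)) ℚ) M),
      ∀ j : ι, ∃ d : ℤ × ℤ, b j ∈ P d) ∧
    (∀ (N : Type u) [AddCommGroup N] [Module ℚ N]
        [Module (MvPolynomial (Option (Fin k)) ℚ) N]
        [IsScalarTower ℚ (MvPolynomial (Option (Fin k)) ℚ) N]
        (Q : ℤ × ℤ → Submodule ℚ N),
      DirectSum.IsInternal Q →
      (∀ (d : ℤ × ℤ) (x : N), x ∈ Q d →
        (MvPolynomial.X (none : Option (Fin k)) : MvPolynomial (Option (Fin k)) ℚ) • x ∈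
          Q (d.1 + 2, d.2)) →
      (∀ (i : Fin k) (d : ℤ × ℤ) (x : N), x ∈ Q d →
        (MvPolynomial.X (some i) : MvPolynomial (Option (Fin k)) ℚ) • x ∈
          Q (d.1, d.2 + 2 * (n i : ℤ))) →
      Module.Free (MvPolynomial (Option (Fin k)) ℚ) N →
      Module.Finite (MvPolynomial (Option (Fin k)) ℚ) N →
      ∃ (ι : Type u) (b : Module.Basis ι (MvPolynomial (Option (Fin k)) ℚ) N),
        ∀ j : ι, ∃ d : ℤ × ℤ, b j ∈ Q d) := by
  constructor
  · refine HBaux.aux_main n hn P hinternal ?_ hbdd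
    intro s d x hx
    cases s with
    | none => exact hcompat_a d x hx
    | some i => exact hcompat_X i d x hx
  · intro N _ _ _ _ Q hQint hQa hQX hQfree hQfin
    haveI := hQfree
    haveI := hQfin
    have hc : ∀ (s : Option (Fin k)) (d : ℤ × ℤ) (x : N), x ∈ Q d →
        (MvPolynomial.X s : MvPolynomial (Option (Fin k)) ℚ) • x ∈ Q (HBaux.shift n s d) := by
      intro s d x hx
      cases s with
      | none => exact hQa d x hx
      | some i => exact hQX i d x hx
    have hbddN := HBaux.aux_bdd n Q hQint hc
    exact HBaux.aux_main n hn Q hQint hc hbddN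
end

section
/- Fix an integer N ≥ 1. Let A = ℚ[a, x₂, y₁] and regard R = ℚ[a, x₁, x₂, y₁] as an A-module (R = A[x₁]). Write u = x₂ − x₁ and h = h_{N−1}(x₁,x₂) = Σ_{i=0}^{N−1} x₁^i x₂^{N−1−i}. Then each of the following families is an A-basis of R: (i) the elements u^k for 0 ≤ k ≤ N−1 together with the elements u^{k+1}·h for all integers k ≥ 0; (ii) the elements u^k for 0 ≤ k ≤ N−2 together with the elements u^k·h for all integers k ≥ 0. -/
open Polynomial

noncomputable section

/-- `A = ℚ[a, x₂, y₁]`: variable `0` is `a`, variable `1` is `x₂`, variable `2` is `y₁`. -/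
abbrev BaseA : Type := MvPolynomial (Fin 3) ℚ

/-- `R = ℚ[a, x₁, x₂, y₁] = A[x₁]`, with `x₁ = Polynomial.X`. -/
abbrev RingR : Type := Polynomial BaseA

/-- `u = x₂ − x₁`. -/
def uElt : RingR := C (MvPolynomial.X 1) - X

/-- `h = h_{N−1}(x₁, x₂) = ∑_{i=0}^{N−1} x₁^i x₂^{N−1−i}`. -/
def hElt (N : ℕ) : RingR :=
  ∑ i ∈ Finset.range N, X ^ i * C (MvPolynomial.X 1 ^ (N - 1 - i))

section General

variable {R : Type*} [CommRing R] [Nontrivial R]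

omit [Nontrivial R] in
theorem monic_family_basis (f : ℕ → R[X]) (hm : ∀ n, (f n).Monic)
    (hd : ∀ n, (f n).natDegree = n) :
    ∃ b : Module.Basis ℕ R R[X], ∀ n, b n = f n := by
  have hcoeff : ∀ n, (f n).coeff n = 1 := by
    intro n
    have := (hm n)
    rw [Polynomial.Monic, Polynomial.leadingCoeff, hd n] at this
    exact this
  have hspan : ∀ n (p : R[X]), p.natDegree ≤ n → p ∈ Submodule.span R (Set.range f) := by
    intro n
    induction n with
    | zero =>
      intro p hp
      have h0 : f 0 = 1 := by
        rw [← (hm 0).natDegree_eq_zero]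
        exact hd 0
      have : p = p.coeff 0 • f 0 := by
        rw [h0, smul_eq_C_mul, mul_one]
        exact Polynomial.eq_C_of_natDegree_le_zero hp
      rw [this]
      exact Submodule.smul_mem _ _ (Submodule.subset_span ⟨0, rfl⟩)
    | succ n ih =>
      intro p hp
      set q := p - p.coeff (n + 1) • f (n + 1) with hqdef
      have hq : q.natDegree ≤ n := by
        rw [natDegree_le_iff_coeff_eq_zero]
        intro m hmn
        have hcm : q.coeff m = p.coeff m - p.coeff (n + 1) * (f (n + 1)).coeff m := by
          simp [hqdef, coeff_smul, smul_eq_mul]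
        rcases eq_or_lt_of_le (Nat.succ_le_of_lt hmn) with h | h
        · rw [hcm, ← h, hcoeff, mul_one, sub_self]
        · have h1 : p.coeff m = 0 := coeff_eq_zero_of_natDegree_lt (lt_of_le_of_lt hp h)
          have h2 : (f (n + 1)).coeff m = 0 :=
            coeff_eq_zero_of_natDegree_lt (by rw [hd]; exact h)
          rw [hcm, h1, h2, mul_zero, sub_zero]
      have hpq : p = q + p.coeff (n + 1) • f (n + 1) := by ring
      rw [hpq]
      exact Submodule.add_mem _ (ih q hq)
        (Submodule.smul_mem _ _ (Submodule.subset_span ⟨n + 1, rfl⟩))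
  have hli : LinearIndependent R f := by
    rw [linearIndependent_iff]
    intro l hl
    by_contra hne
    have hsupp : l.support.Nonempty := Finsupp.support_nonempty_iff.mpr hne
    set n := l.support.max' hsupp with hn
    have hmem : n ∈ l.support := l.support.max'_mem hsupp
    have hc : (Finsupp.linearCombination R f l).coeff n = l n := by
      rw [Finsupp.linearCombination_apply, Finsupp.sum, finset_sum_coeff]
      simp only [coeff_smul, smul_eq_mul]
      rw [Finset.sum_eq_single n]
      · rw [hcoeff, mul_one]
      · intro i hi hine
        have : i < n := lt_of_le_of_ne (l.support.le_max' i hi) hine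
        rw [coeff_eq_zero_of_natDegree_lt (by rw [hd]; exact this), mul_zero]
      · intro h
        rw [Finsupp.notMem_support_iff.mp h, zero_mul]
    rw [hl, coeff_zero] at hc
    exact Finsupp.mem_support_iff.mp hmem hc.symm
  refine ⟨Module.Basis.mk hli ?_, fun n => Module.Basis.mk_apply _ _ n⟩
  intro p _
  exact hspan p.natDegree p le_rfl

theorem unit_lead_family_basis [IsDomain R] (f : ℕ → R[X])
    (hd : ∀ n, (f n).natDegree = n) (hu : ∀ n, IsUnit ((f n).leadingCoeff)) :
    ∃ b : Module.Basis ℕ R R[X], ∀ n, b n = f n := by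
  set w : ℕ → Rˣ := fun n => (hu n).unit with hw
  have hfne : ∀ n, f n ≠ 0 := by
    intro n h
    have := hu n
    rw [h, leadingCoeff_zero] at this
    exact not_isUnit_zero this
  set g : ℕ → R[X] := fun n => ((w n)⁻¹ : Rˣ) • f n with hg
  have hgd : ∀ n, (g n).natDegree = n := by
    intro n
    rw [hg]
    simp only [Units.smul_def, smul_eq_C_mul]
    rw [natDegree_C_mul (by exact (w n)⁻¹.isUnit.ne_zero), hd]
  have hgm : ∀ n, (g n).Monic := by
    intro n
    rw [Polynomial.Monic, Polynomial.leadingCoeff, hgd n, hg]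
    simp only [Units.smul_def, coeff_smul, smul_eq_mul]
    have : (f n).coeff n = (f n).leadingCoeff := by
      rw [Polynomial.leadingCoeff, hd]
    rw [this, hw]
    simp [Units.inv_mul_eq_iff_eq_mul, IsUnit.unit_spec]
  obtain ⟨b, hb⟩ := monic_family_basis g hgm hgd
  refine ⟨b.unitsSMul w, fun n => ?_⟩
  rw [Module.Basis.unitsSMul_apply, hb, hg]
  simp [smul_smul]

end General

/-- The reindexing equivalence `Fin M ⊕ ℕ ≃ ℕ`. -/
def sumNatEquiv (M : ℕ) : Fin M ⊕ ℕ ≃ ℕ where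
  toFun := Sum.elim (fun k => (k : ℕ)) (fun k => M + k)
  invFun n := if h : n < M then Sum.inl ⟨n, h⟩ else Sum.inr (n - M)
  left_inv j := by
    rcases j with k | k
    · simp [k.isLt]
    · simp
  right_inv n := by
    by_cases h : n < M
    · simp [h]
    · simp [h, Nat.add_sub_cancel' (le_of_not_gt h)]

theorem uElt_natDegree : uElt.natDegree = 1 := by
  unfold uElt
  rw [sub_eq_add_neg, add_comm]
  compute_degree!

theorem uElt_leadingCoeff : uElt.leadingCoeff = -1 := by
  have h : uElt = -(X - C (MvPolynomial.X 1)) := by unfold uElt; ring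
  rw [h, leadingCoeff_neg, (monic_X_sub_C _).leadingCoeff]

theorem hElt_coeff (N : ℕ) (m : ℕ) :
    (hElt N).coeff m = if m < N then (MvPolynomial.X 1 : BaseA) ^ (N - 1 - m) else 0 := by
  unfold hElt
  rw [finset_sum_coeff]
  have : ∀ i, (X ^ i * C ((MvPolynomial.X 1 : BaseA) ^ (N - 1 - i))).coeff m
      = if m = i then (MvPolynomial.X 1 : BaseA) ^ (N - 1 - i) else 0 := by
    intro i
    rw [mul_comm, coeff_C_mul, coeff_X_pow]
    split <;> simp
  simp only [this]
  rw [Finset.sum_ite_eq (Finset.range N) m]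
  simp [Finset.mem_range]

theorem hElt_natDegree (N : ℕ) (hN : 1 ≤ N) : (hElt N).natDegree = N - 1 := by
  have hle : (hElt N).natDegree ≤ N - 1 := by
    rw [natDegree_le_iff_coeff_eq_zero]
    intro m hm
    rw [hElt_coeff, if_neg (by omega)]
  have hne : (hElt N).coeff (N - 1) ≠ 0 := by
    rw [hElt_coeff, if_pos (by omega)]
    simp [Nat.sub_self]
  exact le_antisymm hle (le_natDegree_of_ne_zero hne)

theorem hElt_monic (N : ℕ) (hN : 1 ≤ N) : (hElt N).Monic := by
  rw [Polynomial.Monic, Polynomial.leadingCoeff, hElt_natDegree N hN, hElt_coeff,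
    if_pos (by omega)]
  simp [Nat.sub_self]

theorem uElt_ne_zero : uElt ≠ 0 := by
  intro h
  have := uElt_natDegree
  rw [h] at this
  simp at this

theorem hElt_ne_zero (N : ℕ) (hN : 1 ≤ N) : hElt N ≠ 0 :=
  (hElt_monic N hN).ne_zero

/-- For `N ≥ 1`, both families
(i)  `u^k` (`0 ≤ k ≤ N−1`) together with `u^{k+1}·h` (`k ≥ 0`), and
(ii) `u^k` (`0 ≤ k ≤ N−2`) together with `u^k·h` (`k ≥ 0`),
are `A`-bases of `R = A[x₁]`, where `u = x₂ − x₁` and `h = h_{N−1}(x₁,x₂)`. -/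
theorem uElt_hElt_bases (N : ℕ) (hN : 1 ≤ N) :
    (∃ b : Module.Basis (Fin N ⊕ ℕ) BaseA RingR,
      ∀ j, b j = Sum.elim (fun k : Fin N => uElt ^ (k : ℕ))
        (fun k : ℕ => uElt ^ (k + 1) * hElt N) j) ∧
    (∃ b : Module.Basis (Fin (N - 1) ⊕ ℕ) BaseA RingR,
      ∀ j, b j = Sum.elim (fun k : Fin (N - 1) => uElt ^ (k : ℕ))
        (fun k : ℕ => uElt ^ k * hElt N) j) := by
  have hud : ∀ k : ℕ, (uElt ^ k).natDegree = k := by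
    intro k
    rw [natDegree_pow, uElt_natDegree, mul_one]
  have hul : ∀ k : ℕ, (uElt ^ k).leadingCoeff = (-1 : BaseA) ^ k := by
    intro k
    rw [leadingCoeff_pow, uElt_leadingCoeff]
  have huhd : ∀ k : ℕ, (uElt ^ k * hElt N).natDegree = k + (N - 1) := by
    intro k
    rw [natDegree_mul (pow_ne_zero k uElt_ne_zero) (hElt_ne_zero N hN), hud,
      hElt_natDegree N hN]
  have huhl : ∀ k : ℕ, (uElt ^ k * hElt N).leadingCoeff = (-1 : BaseA) ^ k := by
    intro k
    rw [leadingCoeff_mul, hul, (hElt_monic N hN).leadingCoeff, mul_one]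
  have hunit : ∀ k : ℕ, IsUnit ((-1 : BaseA) ^ k) := fun k => (isUnit_one.neg).pow k
  constructor
  · set F : ℕ → RingR := fun n =>
      if n < N then uElt ^ n else uElt ^ (n - N + 1) * hElt N with hF
    obtain ⟨b, hb⟩ := unit_lead_family_basis F
      (by
        intro n
        simp only [hF]
        by_cases h : n < N
        · rw [if_pos h, hud]
        · rw [if_neg h, huhd]; omega)
      (by
        intro n
        simp only [hF]
        by_cases h : n < N
        · rw [if_pos h, hul]; exact hunit _
        · rw [if_neg h, huhl]; exact hunit _)
    refine ⟨b.reindex (sumNatEquiv N).symm, fun j => ?_⟩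
    rw [Module.Basis.reindex_apply, Equiv.symm_symm]
    rcases j with k | k
    · simp only [sumNatEquiv, Equiv.coe_fn_mk, Sum.elim_inl]
      rw [hb]; simp only [hF]; rw [if_pos k.isLt]
    · simp only [sumNatEquiv, Equiv.coe_fn_mk, Sum.elim_inr]
      rw [hb]; simp only [hF]; rw [if_neg (by omega)]
      congr 2
      omega
  · set F : ℕ → RingR := fun n =>
      if n < N - 1 then uElt ^ n else uElt ^ (n - (N - 1)) * hElt N with hF
    obtain ⟨b, hb⟩ := unit_lead_family_basis F
      (by
        intro n
        simp only [hF]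
        by_cases h : n < N - 1
        · rw [if_pos h, hud]
        · rw [if_neg h, huhd]; omega)
      (by
        intro n
        simp only [hF]
        by_cases h : n < N - 1
        · rw [if_pos h, hul]; exact hunit _
        · rw [if_neg h, huhl]; exact hunit _)
    refine ⟨b.reindex (sumNatEquiv (N - 1)).symm, fun j => ?_⟩
    rw [Module.Basis.reindex_apply, Equiv.symm_symm]
    rcases j with k | k
    · simp only [sumNatEquiv, Equiv.coe_fn_mk, Sum.elim_inl]
      rw [hb]; simp only [hF]; rw [if_pos k.isLt]
    · simp only [sumNatEquiv, Equiv.coe_fn_mk, Sum.elim_inr]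
      rw [hb]; simp only [hF]; rw [if_neg (by omega)]
      congr 2
      omega

end
end
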